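/- Let R be a Dedekind domain and M a torsion R-module. Then M is completely virtually regular if and only if M is semisimple. -/

import Mathlib

/-- A submodule is a direct summand if it has a complement. -/
def Submodule.IsDirectSummand {R M : Type*} [Ring R] [AddCommGroup M] [Module R M]
    (N : Submodule R M) : Prop :=
  ∃ N' : Submodule R M, IsCompl N N'

/-- A module is virtually regular if every cyclic submodule is isomorphic to a
direct summand. -/
def VirtuallyRegular (R M : Type*) [Ring R] [AddCommGroup M] [Module R M] : Prop :=
  ∀ m : M, ∃ N : Submodule R M, N.IsDirectSummand ∧
    Nonempty ((Submodule.span R {m}) ≃ₗ[R] N)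

/-- A module is completely virtually regular if every submodule is virtually regular. -/
def CompletelyVirtuallyRegular (R M : Type*) [Ring R] [AddCommGroup M] [Module R M] : Prop :=
  ∀ A : Submodule R M, VirtuallyRegular R A

/-!
Over a Dedekind domain a cyclic torsion module is a quotient of `R ⧸ (a)` with `a ≠ 0`, hence
Artinian, and complete virtual regularity passes to submodules; so it suffices to treat an
Artinian module. There a nonzero cyclic submodule `B` contains a simple cyclic submodule `S`;
virtual regularity of `B` splits off a summand `N ≅ S`, whose complement in `B` is again cyclic
and strictly smaller. Well-founded induction makes every cyclic submodule, hence the module,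
semisimple. Conversely, in a semisimple module every cyclic submodule of a submodule is itself a
direct summand of that submodule.
-/

open Submodule

section VirtuallyRegular

variable {R M N : Type*} [Ring R] [AddCommGroup M] [Module R M] [AddCommGroup N] [Module R N]

theorem Submodule.IsDirectSummand.map_linearEquiv {P : Submodule R M} (hP : P.IsDirectSummand)
    (e : M ≃ₗ[R] N) : (P.map (e : M →ₗ[R] N)).IsDirectSummand :=
  let ⟨Q, hPQ⟩ := hP
  ⟨Q.map (e : M →ₗ[R] N), (orderIsoMapComap e).isCompl hPQ⟩

theorem VirtuallyRegular.of_linearEquiv (h : VirtuallyRegular R M) (e : M ≃ₗ[R] N) :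
    VirtuallyRegular R N := by
  intro n
  obtain ⟨P, hP, ⟨f⟩⟩ := h (e.symm n)
  have hspan : (span R {e.symm n}).map (e : M →ₗ[R] N) = span R {n} := by
    simp [map_span]
  refine ⟨P.map (e : M →ₗ[R] N), IsDirectSummand.map_linearEquiv hP e, ⟨?_⟩⟩
  exact (LinearEquiv.ofEq _ _ hspan.symm).trans <|
    ((e.submoduleMap _).symm.trans f).trans (e.submoduleMap P)

theorem CompletelyVirtuallyRegular.submodule (h : CompletelyVirtuallyRegular R M)
    (A : Submodule R M) : CompletelyVirtuallyRegular R A := fun B =>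
  (h (B.map A.subtype)).of_linearEquiv (equivMapOfInjective _ A.injective_subtype B).symm

theorem CompletelyVirtuallyRegular.of_isSemisimpleModule [IsSemisimpleModule R M] :
    CompletelyVirtuallyRegular R M :=
  fun _ a => ⟨span R {a}, exists_isCompl _, ⟨LinearEquiv.refl R _⟩⟩

theorem VirtuallyRegular.exists_disjoint_sup_eq {B : Submodule R M} (h : VirtuallyRegular R B)
    {x : M} (hx : x ∈ B) :
    ∃ N N' : Submodule R M, Disjoint N N' ∧ N ⊔ N' = B ∧ Nonempty (span R {x} ≃ₗ[R] N) := by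
  obtain ⟨N, ⟨N', hNN'⟩, ⟨e⟩⟩ := h ⟨x, hx⟩
  have hspan : (span R {(⟨x, hx⟩ : B)}).map B.subtype = span R {x} := by
    simp [map_span]
  refine ⟨N.map B.subtype, N'.map B.subtype, disjoint_map B.injective_subtype hNN'.disjoint,
    by rw [← Submodule.map_sup, hNN'.sup_eq_top, map_subtype_top], ⟨?_⟩⟩
  exact (LinearEquiv.ofEq _ _ hspan.symm).trans <|
    ((equivMapOfInjective _ B.injective_subtype _).symm.trans e).trans
      (equivMapOfInjective _ B.injective_subtype N)

end VirtuallyRegular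

section Cyclic

variable {R M : Type*} [Ring R] [AddCommGroup M] [Module R M]

theorem Submodule.exists_eq_span_singleton_of_isAtom {S : Submodule R M} (hS : IsAtom S) :
    ∃ x, S = span R {x} := by
  obtain ⟨x, hxS, hx⟩ := (Submodule.ne_bot_iff S).mp hS.1
  refine ⟨x, ((hS.le_iff.mp ((span_singleton_le_iff_mem x S).mpr hxS)).resolve_left ?_).symm⟩
  rwa [span_singleton_eq_bot]

theorem Submodule.exists_eq_span_singleton_of_sup_eq_span_singleton {N N' : Submodule R M}
    {x : M} (hd : Disjoint N N') (hx : N ⊔ N' = span R {x}) : ∃ y, N' = span R {y} := by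
  obtain ⟨n, hn, n', hn', rfl⟩ := mem_sup.mp (hx ▸ mem_span_singleton_self x)
  refine ⟨n', le_antisymm (fun z hz => ?_) ((span_singleton_le_iff_mem n' N').mpr hn')⟩
  obtain ⟨r, rfl⟩ := mem_span_singleton.mp (hx ▸ mem_sup_right hz : z ∈ span R {n + n'})
  have hrn : r • n = 0 := (disjoint_def.mp hd) _ (N.smul_mem r hn) <| by
    simpa [smul_add] using N'.sub_mem hz (N'.smul_mem r hn')
  exact mem_span_singleton.mpr ⟨r, by rw [smul_add, hrn, zero_add]⟩

theorem isSemisimpleModule_of_isSemisimpleModule_span_singleton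
    (h : ∀ x : M, IsSemisimpleModule R (span R {x})) : IsSemisimpleModule R M :=
  isSemisimpleModule_of_isSemisimpleModule_submodule' h <|
    eq_top_iff'.mpr fun x => mem_iSup_of_mem x (mem_span_singleton_self x)

theorem CompletelyVirtuallyRegular.isSemisimpleModule_span_singleton [IsArtinian R M]
    (h : CompletelyVirtuallyRegular R M) (x : M) : IsSemisimpleModule R (span R {x}) := by
  suffices ∀ B : Submodule R M, (∃ x, span R {x} = B) → IsSemisimpleModule R B from
    this _ ⟨x, rfl⟩
  intro B
  induction B using WellFoundedLT.induction with
  | _ B ih =>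
  rintro ⟨x, rfl⟩
  obtain hbot | ⟨S, hS, hSx⟩ := eq_bot_or_exists_atom_le (span R {x})
  · rw [hbot]
    exact (isSemisimpleModule_iff R _).mpr Subsingleton.instComplementedLattice
  obtain ⟨y, rfl⟩ := exists_eq_span_singleton_of_isAtom hS
  obtain ⟨N, N', hd, hsup, ⟨e⟩⟩ := (h _).exists_disjoint_sup_eq (hSx (mem_span_singleton_self y))
  have : IsSimpleModule R (span R {y}) := isSimpleModule_iff_isAtom.mpr hS
  have : IsSimpleModule R N := IsSimpleModule.congr e.symm
  obtain ⟨y', rfl⟩ := exists_eq_span_singleton_of_sup_eq_span_singleton hd hsup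
  have hlt : span R {y'} < span R {x} := hsup ▸ right_lt_sup.mpr fun hle =>
    (isSimpleModule_iff_isAtom.mp this).1 (hd.eq_bot_of_le hle)
  rw [← hsup]
  exact IsSemisimpleModule.sup inferInstance (ih _ hlt ⟨y', rfl⟩)

theorem CompletelyVirtuallyRegular.isSemisimpleModule [IsArtinian R M]
    (h : CompletelyVirtuallyRegular R M) : IsSemisimpleModule R M :=
  isSemisimpleModule_of_isSemisimpleModule_span_singleton h.isSemisimpleModule_span_singleton

end Cyclic

theorem isArtinian_span_singleton_of_smul_eq_zero {R M : Type*} [CommRing R] [IsNoetherianRing R]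
    [Ring.KrullDimLE 1 R] [AddCommGroup M] [Module R M] {a : R} (ha : a ∈ nonZeroDivisors R)
    {m : M} (hm : a • m = 0) : IsArtinian R (span R {m}) := by
  have : IsArtinian R (R ⧸ Ideal.span {a}) :=
    (isFiniteLength_iff_isNoetherian_isArtinian.mp (isFiniteLength_quotient_span_singleton R ha)).2
  have hle : Ideal.span {a} ≤ LinearMap.ker (LinearMap.toSpanSingleton R M m) := by
    rwa [Ideal.span_le, Set.singleton_subset_iff, SetLike.mem_coe, LinearMap.mem_ker]
  rw [LinearMap.span_singleton_eq_range, ← range_liftQ _ _ hle]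
  infer_instance

theorem torsion_dedekind_completelyVirtuallyRegular_iff_general {R M : Type*} [CommRing R]
    [IsDedekindDomain R] [AddCommGroup M] [Module R M]
    (ht : Module.IsTorsion R M) :
    CompletelyVirtuallyRegular R M ↔ IsSemisimpleModule R M := by
  refine ⟨fun h => isSemisimpleModule_of_isSemisimpleModule_span_singleton fun m => ?_,
    fun _ => .of_isSemisimpleModule⟩
  obtain ⟨a, ha⟩ := @ht m
  have := isArtinian_span_singleton_of_smul_eq_zero a.2 ha
  exact (h.submodule _).isSemisimpleModule

/-- A torsion module over a Dedekind domain is completely virtually regular iff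
it is semisimple. -/
theorem torsion_dedekind_completelyVirtuallyRegular_iff {R M : Type*} [CommRing R]
    [IsDomain R] [IsDedekindDomain R] [AddCommGroup M] [Module R M]
    (ht : Module.IsTorsion R M) :
    CompletelyVirtuallyRegular R M ↔ IsSemisimpleModule R M :=
  torsion_dedekind_completelyVirtuallyRegular_iff_general ht
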